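/- arXiv:2012.11090 — 4 statements merged into one kernel-verified Lean document; each statement's English description precedes it below -/
import Mathlib

section
/- Let a_1, …, a_l, b_1, …, b_m, c_1, …, c_n be positive integers (l ≥ 0, m ≥ 1, n ≥ 1), all of which are at least 2, and assume b_1 < c_1. Then [[a_1, …, a_l, b_1, …, b_m]] < [[a_1, …, a_l, c_1, …, c_n]]. -/
/-- The Hirzebruch–Jung continued fraction `[[a₁, …, aₙ]]`, defined recursively by
`[[aₙ]] = aₙ` and `[[a₁, …, aₙ]] = a₁ - 1/[[a₂, …, aₙ]]`. The value on the empty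
list is junk. -/
noncomputable def hj : List ℝ → ℝ
  | [] => 0
  | [a] => a
  | a :: b :: l => a - 1 / hj (b :: l)

/-!
When all entries are at least `2`, every tail has value `> 1`, so
`[[a, l]] = a - 1/[[l]]` lies in `(a - 1, a]` and is strictly increasing in `[[l]]`.
Hence `b₁ < c₁` already gives `[[b₁, …]] ≤ b₁ ≤ c₁ - 1 < [[c₁, …]]`, and
prepending the common entries `a_l, …, a₁` one at a time preserves the strict
inequality.
-/

lemma hj_cons_of_ne_nil (a : ℝ) {l : List ℝ} (hl : l ≠ []) : hj (a :: l) = a - 1 / hj l := by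
  obtain ⟨b, l, rfl⟩ := List.exists_cons_of_ne_nil hl
  rfl

lemma one_lt_hj : ∀ {l : List ℝ}, l ≠ [] → (∀ x ∈ l, 2 ≤ x) → 1 < hj l
  | [a], _, h2 => by
    have : 2 ≤ a := h2 a List.mem_cons_self
    simp only [hj]
    linarith
  | a :: b :: l, _, h2 => by
    have ha : 2 ≤ a := h2 a List.mem_cons_self
    have htail := one_lt_hj (List.cons_ne_nil b l) (List.forall_mem_cons.mp h2).2
    have : 1 / hj (b :: l) < 1 := (div_lt_one (by linarith)).mpr htail
    rw [hj_cons_of_ne_nil a (List.cons_ne_nil b l)]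
    linarith

lemma hj_cons_le (a : ℝ) {l : List ℝ} (h2 : ∀ x ∈ l, 2 ≤ x) : hj (a :: l) ≤ a := by
  rcases l with _ | ⟨b, l⟩
  · rfl
  · have hl := List.cons_ne_nil b l
    have : 0 < 1 / hj (b :: l) := one_div_pos.mpr (by linarith [one_lt_hj hl h2])
    rw [hj_cons_of_ne_nil a hl]
    linarith

lemma sub_one_lt_hj_cons (a : ℝ) {l : List ℝ} (h2 : ∀ x ∈ l, 2 ≤ x) :
    a - 1 < hj (a :: l) := by
  rcases l with _ | ⟨b, l⟩
  · show a - 1 < a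
    linarith
  · have hl := List.cons_ne_nil b l
    have htail := one_lt_hj hl h2
    have : 1 / hj (b :: l) < 1 := (div_lt_one (by linarith)).mpr htail
    rw [hj_cons_of_ne_nil a hl]
    linarith

lemma hj_cons_lt_hj_cons {b c : ℝ} {u v : List ℝ} (hu : ∀ x ∈ u, 2 ≤ x)
    (hv : ∀ x ∈ v, 2 ≤ x) (hbc : b + 1 ≤ c) : hj (b :: u) < hj (c :: v) := by
  linarith [hj_cons_le b hu, sub_one_lt_hj_cons c hv]

lemma hj_append_lt_hj_append {u v : List ℝ} (hu : u ≠ []) (h2u : ∀ x ∈ u, 2 ≤ x)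
    (hv : v ≠ []) (huv : hj u < hj v) :
    ∀ {l : List ℝ}, (∀ x ∈ l, 2 ≤ x) → hj (l ++ u) < hj (l ++ v)
  | [], _ => huv
  | a :: l, h2al => by
    have h2l := (List.forall_mem_cons.mp h2al).2
    have hlu := List.append_ne_nil_of_right_ne_nil l hu
    have hpos : 0 < hj (l ++ u) := by
      linarith [one_lt_hj hlu (List.forall_mem_append.mpr ⟨h2l, h2u⟩)]
    have ih := hj_append_lt_hj_append hu h2u hv huv h2l
    rw [List.cons_append, List.cons_append, hj_cons_of_ne_nil a hlu,
      hj_cons_of_ne_nil a (List.append_ne_nil_of_right_ne_nil l hv)]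
    linarith [one_div_lt_one_div_of_lt hpos ih]

/-- If `a₁, …, a_l`, `b₁, …, b_m`, `c₁, …, c_n` are positive integers, all at least `2`,
with `b₁ < c₁`, then `[[a₁, …, a_l, b₁, …, b_m]] < [[a₁, …, a_l, c₁, …, c_n]]`. -/
theorem hj_lt_of_head_lt (la lb lc : List ℕ) (hb : lb ≠ []) (hc : lc ≠ [])
    (h2a : ∀ x ∈ la, 2 ≤ x) (h2b : ∀ x ∈ lb, 2 ≤ x) (h2c : ∀ x ∈ lc, 2 ≤ x)
    (hhead : lb.headI < lc.headI) :
    hj ((la ++ lb).map (fun x => (x : ℝ))) < hj ((la ++ lc).map (fun x => (x : ℝ))) := by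
  have cast_two_le {l : List ℕ} (h2 : ∀ x ∈ l, 2 ≤ x) :
      ∀ x ∈ l.map ((↑) : ℕ → ℝ), 2 ≤ x :=
    List.forall_mem_map.mpr fun x hx => by exact_mod_cast h2 x hx
  obtain ⟨b, tb, rfl⟩ := List.exists_cons_of_ne_nil hb
  obtain ⟨c, tc, rfl⟩ := List.exists_cons_of_ne_nil hc
  have hbc : (b : ℝ) + 1 ≤ c := by exact_mod_cast hhead
  -- the coercion in the statement elaborates as a monadic lift `List ℕ → List ℝ`
  simp only [List.pure_def, List.bind_eq_flatMap, List.map_id_fun', id_eq,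
    ← List.map_eq_flatMap, List.map_append]
  refine hj_append_lt_hj_append (by simp) (cast_two_le h2b) (by simp) ?_ (cast_two_le h2a)
  exact hj_cons_lt_hj_cons (cast_two_le (List.forall_mem_cons.mp h2b).2)
    (cast_two_le (List.forall_mem_cons.mp h2c).2) hbc
end

section
/- Let a, b, c be nonnegative integers. Then the Hirzebruch–Jung continued fraction of the sequence consisting of a copies of 2, then 3, then b copies of 2, then 3, then c copies of 2 satisfies [[(2)^a, 3, (2)^b, 3, (2)^c]] = ( ((a+2)b + 3a+5)·c + (2a+4)b + 5a+8 ) / ( ((a+1)b + 3a+2)·c + (2a+2)b + 5a+3 ). -/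
lemma hj_cons (x : ℝ) {l : List ℝ} (hl : l ≠ []) : hj (x :: l) = x - 1 / hj l := by
  cases l with
  | nil => exact absurd rfl hl
  | cons b t => rfl

lemma hj_cons_of_eq_div (x : ℝ) {l : List ℝ} (hl : l ≠ []) {p q : ℝ} (h : hj l = p / q)
    (hp : p ≠ 0) : hj (x :: l) = (x * p - q) / p := by
  rw [hj_cons x hl, h, one_div_div]
  field_simp

lemma hj_replicate_two_append (n : ℕ) {l : List ℝ} (hl : l ≠ []) {p q : ℝ}
    (h : hj l = p / q) (hq : 0 < q) (hqp : q ≤ p) :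
    hj (List.replicate n 2 ++ l) = (p + n * (p - q)) / (q + n * (p - q)) := by
  induction n with
  | zero => simpa using h
  | succ n ih =>
    have hpos : p + n * (p - q) ≠ 0 := by
      have : 0 ≤ (n : ℝ) * (p - q) := by positivity
      linarith
    rw [List.replicate_succ, List.cons_append,
      hj_cons_of_eq_div 2 (by simp [hl]) ih hpos]
    push_cast
    congr 1 <;> ring

lemma hj_three_cons_replicate_two (c : ℕ) :
    hj (3 :: List.replicate c 2) = (2 * c + 3) / (c + 1) := by
  cases c with
  | zero => norm_num [hj]
  | succ k =>
    have htwos : hj (List.replicate (k + 1) 2) = (2 + k * (2 - 1)) / (1 + k * (2 - 1)) := by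
      rw [List.replicate_succ', hj_replicate_two_append k (by simp) (p := 2) (q := 1)
        (by norm_num [hj]) one_pos one_le_two]
    rw [hj_cons_of_eq_div 3 (by simp) htwos (by positivity)]
    push_cast
    congr 1 <;> ring

/-- For nonnegative integers `a`, `b`, `c`,
`[[(2)^a, 3, (2)^b, 3, (2)^c]]
  = (((a+2)b + 3a+5)c + (2a+4)b + 5a+8) / (((a+1)b + 3a+2)c + (2a+2)b + 5a+3)`. -/
theorem hj_two_threes (a b c : ℕ) :
    hj (List.replicate a (2 : ℝ) ++
        (3 : ℝ) :: (List.replicate b (2 : ℝ) ++ (3 : ℝ) :: List.replicate c (2 : ℝ))) =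
      ((((a : ℝ) + 2) * b + 3 * a + 5) * c + (2 * (a : ℝ) + 4) * b + 5 * a + 8) /
        ((((a : ℝ) + 1) * b + 3 * a + 2) * c + (2 * (a : ℝ) + 2) * b + 5 * a + 3) := by
  have hb : hj (List.replicate b 2 ++ 3 :: List.replicate c 2) =
      (((b : ℝ) + 2) * c + 2 * b + 3) / (((b : ℝ) + 1) * c + 2 * b + 1) := by
    rw [hj_replicate_two_append b (by simp) (hj_three_cons_replicate_two c) (by positivity)
      (by linarith [(c.cast_nonneg : (0 : ℝ) ≤ c)])]
    congr 1 <;> ring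
  have h3b : hj (3 :: (List.replicate b 2 ++ 3 :: List.replicate c 2)) =
      ((2 * (b : ℝ) + 5) * c + 4 * b + 8) / (((b : ℝ) + 2) * c + 2 * b + 3) := by
    rw [hj_cons_of_eq_div 3 (by simp) hb (by positivity)]
    congr 1; ring
  rw [hj_replicate_two_append a (by simp) h3b (by positivity)
    (by nlinarith [(b.cast_nonneg : (0 : ℝ) ≤ b), (c.cast_nonneg : (0 : ℝ) ≤ c)])]
  congr 1 <;> ring
end

section
/- Let p be a prime, let r ≥ 1, and for i = 1, …, r let c_i be an integer and d_i a positive integer such that p does not divide d_i. Assume that for every positive integer n, Σ_{i=1}^r ⌊n·c_i/d_i⌋ ≥ −1. Then for every positive integer m, Σ_{i=1}^r ⌊−p·m·c_i/d_i⌋ + #{ i : d_i does not divide m·c_i } ≤ 1. -/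
/-! For `x = a / d` with `d ∣ a` we have `⌊-x⌋ = -⌊x⌋`, and otherwise `⌊-x⌋ = -⌊x⌋ - 1`. Since `p`
is prime to every `dᵢ`, `p m cᵢ / dᵢ` is an integer exactly when `m cᵢ / dᵢ` is, so the left-hand
side equals `-∑ᵢ ⌊p m cᵢ / dᵢ⌋`, which is at most `1` by the hypothesis at `n = p m`. -/

theorem Rat.floor_neg_intCast_div_natCast_add_ite (a : ℤ) {d : ℕ} (hd : d ≠ 0) :
    ⌊-(a : ℚ) / d⌋ + (if ¬ (d : ℤ) ∣ a then 1 else 0) = -⌊(a : ℚ) / d⌋ := by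
  rw [← Int.cast_neg, Rat.floor_intCast_div_natCast, Rat.floor_intCast_div_natCast, Int.neg_ediv,
    Int.sign_natCast_of_ne_zero hd]
  split_ifs <;> ring

theorem Int.natCast_dvd_mul_iff_of_prime_not_dvd {p d : ℕ} (hp : p.Prime) (hpd : ¬ p ∣ d)
    (a : ℤ) : (d : ℤ) ∣ p * a ↔ (d : ℤ) ∣ a := by
  have hcop : IsCoprime (d : ℤ) p :=
    ((Prime.coprime_iff_not_dvd (Nat.prime_iff_prime_int.mp hp)).mpr
      (Int.natCast_dvd_natCast.not.mpr hpd)).symm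
  exact ⟨hcop.dvd_of_dvd_mul_left, (Dvd.dvd.mul_left · _)⟩

theorem floor_sum_neg_p_add_card_le_one_general (p : ℕ) (hp : p.Prime) (r : ℕ)
    (c : Fin r → ℤ) (d : Fin r → ℕ)
    (hpd : ∀ i, ¬ p ∣ d i)
    (hrat : ∀ n : ℕ, 0 < n → -1 ≤ ∑ i, ⌊((n : ℚ) * (c i : ℚ)) / (d i : ℚ)⌋) :
    ∀ m : ℕ, 0 < m →
      (∑ i, ⌊(-((p : ℚ) * (m : ℚ)) * (c i : ℚ)) / (d i : ℚ)⌋) +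
        ((Finset.univ.filter fun i => ¬ ((d i : ℤ) ∣ (m : ℤ) * c i)).card : ℤ) ≤ 1 := by
  intro m hm
  have hterm : ∀ i, ⌊(-((p : ℚ) * (m : ℚ)) * (c i : ℚ)) / (d i : ℚ)⌋
      + (if ¬ (d i : ℤ) ∣ m * c i then 1 else 0) = -⌊(((p * m : ℕ) : ℚ) * c i) / d i⌋ := by
    intro i
    have hdi : d i ≠ 0 := fun h => hpd i (h ▸ dvd_zero p)
    have := Rat.floor_neg_intCast_div_natCast_add_ite (p * (m * c i)) hdi
    simp only [Int.natCast_dvd_mul_iff_of_prime_not_dvd hp (hpd i)] at this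
    convert this using 4 <;> push_cast <;> ring
  calc _ = ∑ i, -⌊(((p * m : ℕ) : ℚ) * c i) / d i⌋ := by
        rw [Finset.natCast_card_filter, ← Finset.sum_add_distrib]
        exact Finset.sum_congr rfl fun i _ => hterm i
    _ ≤ 1 := by
        rw [Finset.sum_neg_distrib]
        linarith [hrat (p * m) (Nat.mul_pos hp.pos hm)]

/-- Arithmetic content of the paper's Theorem 3.6: if `p` is prime, `p ∤ dᵢ`, and
`∑ᵢ ⌊n·cᵢ/dᵢ⌋ ≥ −1` for every positive integer `n`, then for every positive integer `m`,
`∑ᵢ ⌊−p·m·cᵢ/dᵢ⌋ + #{i : dᵢ ∤ m·cᵢ} ≤ 1`. -/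
theorem floor_sum_neg_p_add_card_le_one (p : ℕ) (hp : p.Prime) (r : ℕ) (hr : 1 ≤ r)
    (c : Fin r → ℤ) (d : Fin r → ℕ) (hd : ∀ i, 0 < d i)
    (hpd : ∀ i, ¬ p ∣ d i)
    (hrat : ∀ n : ℕ, 0 < n → -1 ≤ ∑ i, ⌊((n : ℚ) * (c i : ℚ)) / (d i : ℚ)⌋) :
    ∀ m : ℕ, 0 < m →
      (∑ i, ⌊(-((p : ℚ) * (m : ℚ)) * (c i : ℚ)) / (d i : ℚ)⌋) +
        ((Finset.univ.filter fun i => ¬ ((d i : ℤ) ∣ (m : ℤ) * c i)).card : ℤ) ≤ 1 :=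
  floor_sum_neg_p_add_card_le_one_general p hp r c d hpd hrat
end

section
/- Let s and r be positive integers and p a prime. For each i = 1, …, r let (q_i^{(l)})_{l≥1} be a nondecreasing sequence of rationals with 0 < q_i^{(l)} < 1 converging to a rational q_i = c_i/d_i (with 0 < c_i < d_i integers), and assume p > d_i for every i. Then for every positive integer n there exists L such that for all l ≥ L: −p·n·s + Σ_{i=1}^r ⌊p·n·q_i^{(l)}⌋ + #{ i : −p⌊n·q_i^{(l)}⌋ + ⌊p·n·q_i^{(l)}⌋ ≠ 0 } ≤ −p·n·s + Σ_{i=1}^r ⌊p·n·q_i⌋ + #{ i : −p⌊n·q_i⌋ + ⌊p·n·q_i⌋ ≠ 0 }. -/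
/-!
Since `qᵢ⁽ˡ⁾ ≤ qᵢ` for every `l`, the inequality holds for all `l`, termwise, once
`x ↦ ⌊p x⌋ + [⌊p x⌋ ≠ p ⌊x⌋]` is monotone. If `⌊p x⌋ < ⌊p y⌋`, the indicator cannot make up
the difference; if `⌊p x⌋ = ⌊p y⌋ = p ⌊y⌋`, then `p ⌊y⌋ ≤ p x` forces `⌊x⌋ = ⌊y⌋`, so the
indicator vanishes at `x` too.
-/

section

variable {K : Type*} [Field K] [LinearOrder K] [IsStrictOrderedRing K] [FloorRing K]

theorem floor_mul_add_indicator_monotone (p : ℕ) :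
    Monotone fun x : K =>
      ⌊(p : K) * x⌋ + if -(p : ℤ) * ⌊x⌋ + ⌊(p : K) * x⌋ ≠ 0 then (1 : ℤ) else 0 := by
  intro x y hxy
  dsimp only
  rcases p.eq_zero_or_pos with rfl | hp
  · simp
  have hfloor_p : ⌊(p : K) * x⌋ ≤ ⌊(p : K) * y⌋ := Int.floor_mono (by gcongr)
  rcases hfloor_p.lt_or_eq with hlt | heq
  · split_ifs <;> omega
  · suffices hy : -(p : ℤ) * ⌊y⌋ + ⌊(p : K) * y⌋ = 0 → -(p : ℤ) * ⌊x⌋ + ⌊(p : K) * x⌋ = 0 by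
      simp only [heq]
      split_ifs <;> simp_all
    intro hy
    have hfloor_le : ⌊x⌋ ≤ ⌊y⌋ := Int.floor_mono hxy
    have hfloor_ge : ⌊y⌋ ≤ ⌊x⌋ := by
      rw [Int.le_floor]
      have h : ((p * ⌊y⌋ : ℤ) : K) ≤ p * x := by
        rw [show (p : ℤ) * ⌊y⌋ = ⌊(p : K) * x⌋ by linarith]
        exact Int.floor_le _
      push_cast at h
      exact le_of_mul_le_mul_left h (by exact_mod_cast hp)
    rw [le_antisymm hfloor_le hfloor_ge, heq, hy]

end

theorem eventually_deg_le_general (s r p : ℕ)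
    (q : Fin r → ℕ → ℚ) (c d : Fin r → ℤ)
    (hmono : ∀ i, Monotone (q i))
    (htend : ∀ i, Filter.Tendsto (q i) Filter.atTop (nhds ((c i : ℚ) / (d i : ℚ)))) :
    ∀ n : ℕ, 0 < n → ∃ L : ℕ, ∀ l ≥ L,
      -(p : ℤ) * n * s + (∑ i, ⌊(p : ℚ) * (n : ℚ) * q i l⌋) +
          ((Finset.univ.filter fun i =>
            -(p : ℤ) * ⌊(n : ℚ) * q i l⌋ + ⌊(p : ℚ) * (n : ℚ) * q i l⌋ ≠ 0).card : ℤ) ≤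
        -(p : ℤ) * n * s + (∑ i, ⌊(p : ℚ) * (n : ℚ) * ((c i : ℚ) / (d i : ℚ))⌋) +
          ((Finset.univ.filter fun i =>
            -(p : ℤ) * ⌊(n : ℚ) * ((c i : ℚ) / (d i : ℚ))⌋ +
              ⌊(p : ℚ) * (n : ℚ) * ((c i : ℚ) / (d i : ℚ))⌋ ≠ 0).card : ℤ) := by
  intro n _
  refine ⟨0, fun l _ => ?_⟩
  have hle : ∀ i, (n : ℚ) * q i l ≤ n * (c i / d i) := fun i =>
    mul_le_mul_of_nonneg_left ((hmono i).ge_of_tendsto (htend i) l) n.cast_nonneg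
  simp only [mul_assoc (p : ℚ), ← Finset.sum_boole, add_assoc, ← Finset.sum_add_distrib]
  exact add_le_add le_rfl (Finset.sum_le_sum fun i _ => floor_mul_add_indicator_monotone p (hle i))

/-- Arithmetic content of the paper's Lemma 4.3(3): if `qᵢ⁽ˡ⁾` are nondecreasing sequences
of rationals in `(0,1)` converging to `cᵢ/dᵢ` (with `0 < cᵢ < dᵢ` and `p > dᵢ` for a
prime `p`), then for every positive integer `n` and all sufficiently large `l`,
`−pns + ∑ᵢ ⌊pn·qᵢ⁽ˡ⁾⌋ + #{i : −p⌊n·qᵢ⁽ˡ⁾⌋ + ⌊pn·qᵢ⁽ˡ⁾⌋ ≠ 0}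
  ≤ −pns + ∑ᵢ ⌊pn·qᵢ⌋ + #{i : −p⌊n·qᵢ⌋ + ⌊pn·qᵢ⌋ ≠ 0}`. -/
theorem eventually_deg_le (s r p : ℕ) (hs : 0 < s) (hr : 0 < r) (hp : p.Prime)
    (q : Fin r → ℕ → ℚ) (c d : Fin r → ℤ)
    (hc : ∀ i, 0 < c i) (hcd : ∀ i, c i < d i)
    (hq0 : ∀ i l, 0 < q i l) (hq1 : ∀ i l, q i l < 1)
    (hmono : ∀ i, Monotone (q i))
    (htend : ∀ i, Filter.Tendsto (q i) Filter.atTop (nhds ((c i : ℚ) / (d i : ℚ))))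
    (hpd : ∀ i, d i < (p : ℤ)) :
    ∀ n : ℕ, 0 < n → ∃ L : ℕ, ∀ l ≥ L,
      -(p : ℤ) * n * s + (∑ i, ⌊(p : ℚ) * (n : ℚ) * q i l⌋) +
          ((Finset.univ.filter fun i =>
            -(p : ℤ) * ⌊(n : ℚ) * q i l⌋ + ⌊(p : ℚ) * (n : ℚ) * q i l⌋ ≠ 0).card : ℤ) ≤
        -(p : ℤ) * n * s + (∑ i, ⌊(p : ℚ) * (n : ℚ) * ((c i : ℚ) / (d i : ℚ))⌋) +
          ((Finset.univ.filter fun i =>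
            -(p : ℤ) * ⌊(n : ℚ) * ((c i : ℚ) / (d i : ℚ))⌋ +
              ⌊(p : ℚ) * (n : ℚ) * ((c i : ℚ) / (d i : ℚ))⌋ ≠ 0).card : ℤ) :=
  eventually_deg_le_general s r p q c d hmono htend
end
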